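/- arXiv:2208.04208 — 2 statements merged into one kernel-verified Lean document; each statement's English description precedes it below -/
import Mathlib

section
/- Let g : [-1/2,1/2]^2 → ℝ be a bivariate polynomial of degree at most n in each variable, not identically zero, whose zero set is a finite union of smooth rectifiable curves. Then the total length (1-dimensional Hausdorff measure) of the zero set of g in [-1/2,1/2]^2 is at most C·n for some absolute constant C > 0. -/
/-!
Away from its critical points a C¹ curve in the plane is locally a 2-Lipschitz graph over one of
the coordinate axes (the one whose coordinate of `γ'` dominates), and countably many rational
parameter intervals suffice to cover it by such graphs. Made disjoint, the graphs over one axis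
have total length at most twice the total length of their projections, and since a generic line
parallel to the other axis meets the zero set in at most `n` points, these projections cover
`[-1/2, 1/2]` at most `n` times. The critical values are negligible because the curve is
dominated by its arc length, whose derivative vanishes there. Hence the length is at most `4n`.
-/

open MeasureTheory Set Filter Function
open scoped NNReal ENNReal

theorem hausdorffMeasure_image_le_of_dist_le {α X Y : Type*} [MetricSpace X] [MeasurableSpace X]
    [BorelSpace X] [MetricSpace Y] [MeasurableSpace Y] [BorelSpace Y] {f : α → X} {g : α → Y}
    {s : Set α} {L : ℝ≥0} (h : ∀ t ∈ s, ∀ u ∈ s, dist (f t) (f u) ≤ L * dist (g t) (g u))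
    {d : ℝ} (hd : 0 ≤ d) : μH[d] (f '' s) ≤ (L : ℝ≥0∞) ^ d * μH[d] (g '' s) := by
  rcases s.eq_empty_or_nonempty with rfl | ⟨t₀, -⟩
  · simp
  have : Nonempty α := ⟨t₀⟩
  -- `f` factors through `g` on `s`, as `f = w ∘ g` with `w` Lipschitz on `g '' s`.
  set w := f ∘ invFunOn g s
  have hw : ∀ t ∈ s, w (g t) = f t := fun t ht => by
    have hmem : invFunOn g s (g t) ∈ s := invFunOn_mem ⟨t, ht, rfl⟩
    have heq : g (invFunOn g s (g t)) = g t := invFunOn_eq ⟨t, ht, rfl⟩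
    exact dist_le_zero.1 (by simpa [w, heq] using h _ hmem t ht)
  have hlip : LipschitzOnWith L w (g '' s) := by
    refine LipschitzOnWith.of_dist_le_mul ?_
    rintro _ ⟨t, ht, rfl⟩ _ ⟨u, hu, rfl⟩
    rw [hw t ht, hw u hu]
    exact h t ht u hu
  rw [← image_congr hw, ← image_image]
  exact hlip.hausdorffMeasure_image_le hd

theorem encard_setOf_mem_image_le {ι X β : Type*} {D : ι → Set X}
    (hD : Pairwise (Disjoint on D)) (π : X → β) (x : β) :
    {k | x ∈ π '' D k}.encard ≤ {z ∈ ⋃ k, D k | π z = x}.encard := by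
  rcases isEmpty_or_nonempty X with hX | hX
  · simp [eq_empty_of_isEmpty]
  choose! z hzD hzx using fun k (hk : x ∈ π '' D k) => hk
  refine encard_le_encard_of_injOn (fun k hk => ⟨mem_iUnion.2 ⟨k, hzD k hk⟩, hzx k hk⟩)
    fun k hk j hj hkj => ?_
  by_contra hne
  exact (hD hne).ne_of_mem (hzD k hk) (hzD j hj) hkj

theorem tsum_measure_le_of_ae_encard_le {α ι : Type*} [MeasurableSpace α] {μ : Measure α}
    [Countable ι] {T : ι → Set α} (hT : ∀ k, MeasurableSet (T k)) {N : ℕ}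
    (hN : ∀ᵐ x ∂μ, {k | x ∈ T k}.encard ≤ N) : ∑' k, μ (T k) ≤ N * μ (⋃ k, T k) := by
  have hmult : ∀ x, ∑' k, (T k).indicator 1 x = ({k | x ∈ T k}.encard : ℝ≥0∞) := fun x => by
    rw [← ENNReal.tsum_set_one, tsum_subtype _ fun _ => (1 : ℝ≥0∞)]
    rfl
  calc ∑' k, μ (T k) = ∫⁻ x, ∑' k, (T k).indicator 1 x ∂μ := by
        rw [lintegral_tsum fun k => (measurable_one.indicator (hT k)).aemeasurable]
        simp only [lintegral_indicator_one (hT _)]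
    _ ≤ ∫⁻ x, (⋃ k, T k).indicator (fun _ => (N : ℝ≥0∞)) x ∂μ := by
        refine lintegral_mono_ae (hN.mono fun x hx => ?_)
        rw [hmult]
        by_cases hxT : x ∈ ⋃ k, T k
        · rw [indicator_of_mem hxT]
          exact_mod_cast hx
        · simp only [mem_iUnion, not_exists] at hxT
          simp [hxT]
    _ = N * μ (⋃ k, T k) := lintegral_indicator_const (MeasurableSet.iUnion hT) _

theorem hausdorffMeasure_sUnion_le_of_dist_le {X : Type*} [MetricSpace X] [PolishSpace X]
    [MeasurableSpace X] [BorelSpace X] {𝒜 : Set (Set X)} (h𝒜 : 𝒜.Countable)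
    (hmeas : ∀ A ∈ 𝒜, MeasurableSet A) {π : X → ℝ} (hπ : Continuous π) {K : ℝ≥0}
    (hgraph : ∀ A ∈ 𝒜, ∀ z ∈ A, ∀ w ∈ A, dist z w ≤ K * dist (π z) (π w)) {Z : Set X}
    {J : Set ℝ} (hAZ : ∀ A ∈ 𝒜, A ⊆ Z ∩ π ⁻¹' J) {N : ℕ}
    (hN : ∀ᵐ x, {z ∈ Z | π z = x}.encard ≤ N) : μH[1] (⋃₀ 𝒜) ≤ K * N * volume J := by
  -- Adding `∅` makes the family nonempty, so that it can be enumerated and then disjointified.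
  obtain ⟨A, hA⟩ := (h𝒜.insert ∅).exists_eq_range (insert_nonempty _ _)
  have hAprop : ∀ n, MeasurableSet (A n) ∧ A n ⊆ Z ∩ π ⁻¹' J ∧
      ∀ z ∈ A n, ∀ w ∈ A n, dist z w ≤ K * dist (π z) (π w) := fun n => by
    obtain h | h : A n = ∅ ∨ A n ∈ 𝒜 := by
      simpa only [← hA, mem_insert_iff] using mem_range_self (f := A) n
    · simp [h]
    · exact ⟨hmeas _ h, hAZ _ h, hgraph _ h⟩
  set D := disjointed A
  have hDA : ∀ n, D n ⊆ A n := disjointed_subset A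
  have hDZ : ∀ n, D n ⊆ Z ∩ π ⁻¹' J := fun n => (hDA n).trans (hAprop n).2.1
  have hDgraph : ∀ n, ∀ z ∈ D n, ∀ w ∈ D n, dist z w ≤ K * dist (π z) (π w) :=
    fun n z hz w hw => (hAprop n).2.2 z (hDA n hz) w (hDA n hw)
  have hDmeas : ∀ n, MeasurableSet (π '' D n) := fun n =>
    (MeasurableSet.disjointed (fun n => (hAprop n).1) n).image_of_continuousOn_injOn
      hπ.continuousOn fun z hz w hw h => dist_le_zero.1 (by simpa [h] using hDgraph n z hz w hw)
  have hcount : ∀ᵐ x, {n | x ∈ π '' D n}.encard ≤ N := hN.mono fun x hx => by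
    have hfiber : {z ∈ ⋃ n, D n | π z = x} ⊆ {z ∈ Z | π z = x} := fun z hz =>
      ⟨(iUnion_subset hDZ hz.1).1, hz.2⟩
    exact (encard_setOf_mem_image_le (disjoint_disjointed A) π x).trans
      ((encard_le_encard hfiber).trans hx)
  calc μH[1] (⋃₀ 𝒜) ≤ μH[1] (⋃ n, D n) := by
        refine measure_mono ?_
        rw [iUnion_disjointed, ← sUnion_range, ← hA]
        exact sUnion_mono (subset_insert _ _)
    _ ≤ ∑' n, μH[1] (D n) := measure_iUnion_le _
    _ ≤ ∑' n, K * volume (π '' D n) := ENNReal.tsum_le_tsum fun n => by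
        simpa [hausdorffMeasure_real] using
          hausdorffMeasure_image_le_of_dist_le (f := id) (hDgraph n) zero_le_one
    _ = K * ∑' n, volume (π '' D n) := ENNReal.tsum_mul_left
    _ ≤ K * (N * volume (⋃ n, π '' D n)) := by
        gcongr
        exact tsum_measure_le_of_ae_encard_le hDmeas hcount
    _ ≤ K * N * volume J := by
        rw [mul_assoc]
        gcongr
        exact iUnion_subset fun n => image_subset_iff.2 fun z hz => (hDZ n hz).2

section Curves

variable {E : Type*} [NormedAddCommGroup E] [NormedSpace ℝ E]

theorem dist_le_dist_of_norm_deriv_le {f : ℝ → E} {g : ℝ → ℝ} {s : Set ℝ} (hs : s.OrdConnected)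
    (hf : Differentiable ℝ f) (hg : Differentiable ℝ g)
    (hfg : ∀ x ∈ s, ‖deriv f x‖ ≤ deriv g x) {t u : ℝ} (ht : t ∈ s) (hu : u ∈ s) :
    dist (f t) (f u) ≤ dist (g t) (g u) := by
  wlog htu : t ≤ u generalizing t u
  · rw [dist_comm, dist_comm (g t)]
    exact this hu ht (le_of_not_ge htu)
  have key : ‖f u - f t‖ ≤ g u - g t :=
    image_norm_le_of_norm_deriv_right_le_deriv_boundary (f := fun x => f x - f t)
      (B := fun x => g x - g t) (hf.continuous.sub continuous_const).continuousOn
      (fun x _ => ((hf x).hasDerivAt.sub_const _).hasDerivWithinAt) (by simp)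
      (fun x => (hg x).hasDerivAt.sub_const _)
      (fun x hx => hfg x (hs.out ht hu (Ico_subset_Icc_self hx))) ⟨htu, le_rfl⟩
  rw [dist_comm, dist_eq_norm, Real.dist_eq, abs_sub_comm]
  exact key.trans (le_abs_self _)

theorem hausdorffMeasure_image_setOf_deriv_eq_zero [MeasurableSpace E] [BorelSpace E]
    {γ : ℝ → E} (hγ : ContDiff ℝ 1 γ) : μH[1] (γ '' {t | deriv γ t = 0}) = 0 := by
  have hγ' : Continuous (deriv γ) := hγ.continuous_deriv le_rfl
  -- Compare `γ` with its arc length `v`, whose derivative `‖γ'‖` vanishes on the critical set.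
  set v : ℝ → ℝ := fun t => ∫ u in (0 : ℝ)..t, ‖deriv γ u‖
  have hv : ∀ t, HasDerivAt v ‖deriv γ t‖ t := fun t =>
    (hγ'.norm.integral_hasStrictDerivAt 0 t).hasDerivAt
  have hdist : ∀ t ∈ {t | deriv γ t = 0}, ∀ u ∈ {t | deriv γ t = 0},
      dist (γ t) (γ u) ≤ ((1 : ℝ≥0) : ℝ) * dist (v t) (v u) := fun t _ u _ => by
    rw [NNReal.coe_one, one_mul]
    exact dist_le_dist_of_norm_deriv_le ordConnected_univ (hγ.differentiable one_ne_zero)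
      (fun t => (hv t).differentiableAt) (fun t _ => (hv t).deriv.ge) trivial trivial
  have hnull : volume (v '' {t | deriv γ t = 0}) = 0 :=
    addHaar_image_eq_zero_of_det_fderivWithin_eq_zero volume
      (fun t _ => (hv t).hasFDerivAt.hasFDerivWithinAt) (fun t ht => by simp [ht.out])
  refine le_antisymm ?_ zero_le
  calc μH[1] (γ '' {t | deriv γ t = 0})
      ≤ ((1 : ℝ≥0) : ℝ≥0∞) ^ (1 : ℝ) * μH[1] (v '' {t | deriv γ t = 0}) :=
        hausdorffMeasure_image_le_of_dist_le hdist zero_le_one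
    _ = 0 := by rw [hausdorffMeasure_real, hnull, mul_zero]

theorem exists_countable_cover_image_setOf_norm_deriv_lt {γ : ℝ → E} (hγ : ContDiff ℝ 1 γ)
    (ℓ : E →L[ℝ] ℝ) (K : ℝ≥0) {s : Set ℝ} (hs : IsClosed s) :
    ∃ 𝒜 : Set (Set E), 𝒜.Countable ∧
      (∀ A ∈ 𝒜, IsCompact A ∧ A ⊆ γ '' s ∧ ∀ z ∈ A, ∀ w ∈ A, dist z w ≤ K * dist (ℓ z) (ℓ w)) ∧
      γ '' {t ∈ s | ‖deriv γ t‖ < K * ℓ (deriv γ t)} ⊆ ⋃₀ 𝒜 := by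
  have hγ' : Continuous (deriv γ) := hγ.continuous_deriv le_rfl
  have hdiff : Differentiable ℝ γ := hγ.differentiable one_ne_zero
  have hKℓ : ∀ x, HasDerivAt (fun x => K * ℓ (γ x)) (K * ℓ (deriv γ x)) x := fun x =>
    (ℓ.hasFDerivAt.comp_hasDerivAt x (hdiff x).hasDerivAt).const_mul (K : ℝ)
  set good : Set (ℚ × ℚ) := {q | ∀ u ∈ Icc (q.1 : ℝ) q.2, ‖deriv γ u‖ ≤ K * ℓ (deriv γ u)}
  refine ⟨(fun q : ℚ × ℚ => γ '' (Icc (q.1 : ℝ) q.2 ∩ s)) '' good, (to_countable _).image _,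
    ?_, ?_⟩
  · rintro _ ⟨q, hq, rfl⟩
    refine ⟨(isCompact_Icc.inter_right hs).image hγ.continuous, image_mono inter_subset_right, ?_⟩
    rintro _ ⟨t, ht, rfl⟩ _ ⟨u, hu, rfl⟩
    calc dist (γ t) (γ u) ≤ dist (K * ℓ (γ t)) (K * ℓ (γ u)) :=
          dist_le_dist_of_norm_deriv_le ordConnected_Icc hdiff (fun x => (hKℓ x).differentiableAt)
            (fun x hx => (hKℓ x).deriv ▸ hq x hx) ht.1 hu.1
      _ = K * dist (ℓ (γ t)) (ℓ (γ u)) := by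
          rw [Real.dist_eq, Real.dist_eq, ← mul_sub, abs_mul, NNReal.abs_eq]
  · rintro _ ⟨t, ⟨hts, ht⟩, rfl⟩
    have hopen : IsOpen {u | ‖deriv γ u‖ < K * ℓ (deriv γ u)} :=
      isOpen_lt hγ'.norm (continuous_const.mul (ℓ.continuous.comp hγ'))
    obtain ⟨ε, hε, hball⟩ := Metric.isOpen_iff.1 hopen t ht
    obtain ⟨q₁, hεq₁, hq₁⟩ := exists_rat_btwn (sub_lt_self t hε)
    obtain ⟨q₂, hq₂, hq₂ε⟩ := exists_rat_btwn (lt_add_of_pos_right t hε)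
    refine ⟨_, ⟨(q₁, q₂), fun u hu => (hball ?_).le, rfl⟩, t, ⟨⟨hq₁.le, hq₂.le⟩, hts⟩, rfl⟩
    rw [Real.ball_eq_Ioo]
    exact ⟨hεq₁.trans_le hu.1, hu.2.trans_lt hq₂ε⟩

theorem hausdorffMeasure_iUnion_image_setOf_norm_deriv_lt_le {ι : Type*} [Countable ι]
    [FiniteDimensional ℝ E] [MeasurableSpace E] [BorelSpace E] {γ : ι → ℝ → E}
    (hγ : ∀ i, ContDiff ℝ 1 (γ i)) {s : Set ℝ} (hs : IsClosed s) (π : E →L[ℝ] ℝ) (K : ℝ≥0)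
    {Z : Set E} {J : Set ℝ} (hZ : ∀ i, γ i '' s ⊆ Z ∩ π ⁻¹' J) {N : ℕ}
    (hN : ∀ᵐ x, {z ∈ Z | π z = x}.encard ≤ N) :
    μH[1] (⋃ i, γ i '' {t ∈ s | ‖deriv (γ i) t‖ < K * |π (deriv (γ i) t)|}) ≤
      K * N * volume J := by
  choose 𝒜 h𝒜 hA hcover using fun i (ℓ : E →L[ℝ] ℝ) =>
    exists_countable_cover_image_setOf_norm_deriv_lt (hγ i) ℓ K hs
  -- A graph over `-π` is a graph over `π`, so both signs of `π ∘ γ'` are covered by one family.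
  set 𝒜π := ⋃ i, 𝒜 i π ∪ 𝒜 i (-π)
  have hA𝒜π : ∀ A ∈ 𝒜π, IsCompact A ∧ A ⊆ Z ∩ π ⁻¹' J ∧
      ∀ z ∈ A, ∀ w ∈ A, dist z w ≤ K * dist (π z) (π w) := by
    simp only [𝒜π, mem_iUnion, mem_union]
    rintro A ⟨i, hA' | hA'⟩
    · obtain ⟨hcpt, hsub, hgraph⟩ := hA i π A hA'
      exact ⟨hcpt, hsub.trans (hZ i), hgraph⟩
    · obtain ⟨hcpt, hsub, hgraph⟩ := hA i (-π) A hA'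
      refine ⟨hcpt, hsub.trans (hZ i), fun z hz w hw => ?_⟩
      simpa using hgraph z hz w hw
  refine (measure_mono ?_).trans <| hausdorffMeasure_sUnion_le_of_dist_le
    (countable_iUnion fun i => (h𝒜 i π).union (h𝒜 i (-π)))
    (fun A hA => (hA𝒜π A hA).1.isClosed.measurableSet) π.continuous
    (fun A hA => (hA𝒜π A hA).2.2) (fun A hA => (hA𝒜π A hA).2.1) hN
  refine iUnion_subset fun i => ?_
  rintro _ ⟨t, ⟨hts, ht⟩, rfl⟩
  rcases le_or_gt 0 (π (deriv (γ i) t)) with hpos | hneg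
  · rw [abs_of_nonneg hpos] at ht
    obtain ⟨A, hA, hmem⟩ := hcover i π ⟨t, ⟨hts, ht⟩, rfl⟩
    exact ⟨A, mem_iUnion.2 ⟨i, Or.inl hA⟩, hmem⟩
  · rw [abs_of_neg hneg, ← neg_apply] at ht
    obtain ⟨A, hA, hmem⟩ := hcover i (-π) ⟨t, ⟨hts, ht⟩, rfl⟩
    exact ⟨A, mem_iUnion.2 ⟨i, Or.inr hA⟩, hmem⟩

end Curves

namespace MvPolynomial

variable {R : Type*} [CommRing R] [IsDomain R]

theorem finite_setOf_eval_vecCons_eq_zero {c : MvPolynomial (Fin 1) R} (hc : c ≠ 0) :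
    {b : R | eval ![b] c = 0}.Finite := by
  have hinj : Injective (eval (![] : Fin 0 → R)) :=
    aeval_injective_iff_of_isEmpty.2 fun _ _ h => h
  set r := (finSuccEquiv R 0 c).map (eval (![] : Fin 0 → R))
  have hr : r ≠ 0 :=
    (Polynomial.map_ne_zero_iff hinj).2 ((finSuccEquiv R 0).map_ne_zero_iff.2 hc)
  refine (Polynomial.finite_setOfPred_isRoot hr).subset fun b hb => ?_
  simpa [r, ← eval_eq_eval_mv_eval'] using hb

theorem eventually_encard_setOf_eval_eq_zero_le {p : MvPolynomial (Fin 2) R} (hp : p ≠ 0) :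
    ∀ᶠ b in cofinite, {a : R | eval ![a, b] p = 0}.encard ≤ p.degreeOf 0 := by
  set Q := finSuccEquiv R 1 p
  obtain ⟨i, hi⟩ : ∃ i, Q.coeff i ≠ 0 := by
    by_contra! h
    exact hp ((finSuccEquiv R 1).map_eq_zero_iff.1 (Polynomial.ext h))
  classical
  rw [eventually_cofinite]
  refine (finite_setOf_eval_vecCons_eq_zero hi).subset fun b hb => ?_
  simp only [mem_ofPred_eq] at hb ⊢
  by_contra hb'
  set q := Q.map (eval ![b])
  have hq : q ≠ 0 := fun h => hb' (by simpa [q] using congrArg (·.coeff i) h)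
  have hroots : {a : R | eval ![a, b] p = 0} = q.roots.toFinset := by
    ext a
    rw [mem_ofPred_eq, Finset.mem_coe, Multiset.mem_toFinset, Polynomial.mem_roots hq,
      Polynomial.IsRoot.def]
    exact Iff.of_eq (congrArg (· = 0) (eval_eq_eval_mv_eval' ![b] a p))
  apply hb
  rw [hroots, encard_coe_eq_coe_finsetCard]
  calc (q.roots.toFinset.card : ℕ∞) ≤ q.natDegree :=
        Nat.cast_le.2 (q.roots.toFinset_card_le.trans q.card_roots')
    _ ≤ p.degreeOf 0 :=
        Nat.cast_le.2 (Polynomial.natDegree_map_le.trans (natDegree_finSuccEquiv p).le)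

theorem eventually_encard_setOf_eval_eq_zero_le' {p : MvPolynomial (Fin 2) R} (hp : p ≠ 0) :
    ∀ᶠ a in cofinite, {b : R | eval ![a, b] p = 0}.encard ≤ p.degreeOf 1 := by
  set p' := rename (Equiv.swap (0 : Fin 2) 1) p
  have hp' : p' ≠ 0 := (rename_injective _ (Equiv.swap 0 1).injective).ne_iff' (map_zero _) |>.2 hp
  have hdeg : p'.degreeOf 0 = p.degreeOf 1 := by
    simpa using degreeOf_rename_of_injective (p := p) (Equiv.swap (0 : Fin 2) 1).injective 1
  have hswap : ∀ a b : R, eval ![b, a] p' = eval ![a, b] p := fun a b => by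
    have : ![b, a] ∘ Equiv.swap (0 : Fin 2) 1 = ![a, b] := by
      funext j
      fin_cases j <;> rfl
    rw [eval_rename, this]
  simpa [hswap, hdeg] using eventually_encard_setOf_eval_eq_zero_le hp'

end MvPolynomial

theorem Prod.norm_lt_two_mul_norm_fst_or_snd {F G : Type*} [NormedAddCommGroup F]
    [NormedAddCommGroup G] {d : F × G} (hd : d ≠ 0) : ‖d‖ < 2 * ‖d.1‖ ∨ ‖d‖ < 2 * ‖d.2‖ := by
  have hpos : 0 < ‖d‖ := norm_pos_iff.2 hd
  rw [Prod.norm_def] at hpos ⊢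
  rcases le_total ‖d.1‖ ‖d.2‖ with h | h
  · rw [max_eq_right h] at hpos ⊢
    exact Or.inr (by linarith)
  · rw [max_eq_left h] at hpos ⊢
    exact Or.inl (by linarith)

theorem ae_encard_setOf_eval_eq_zero_fst_le {p : MvPolynomial (Fin 2) ℝ} (hp : p ≠ 0) :
    ∀ᵐ x : ℝ, {z : ℝ × ℝ | MvPolynomial.eval ![z.1, z.2] p = 0 ∧ z.1 = x}.encard ≤
      p.degreeOf 1 := by
  have h := MvPolynomial.eventually_encard_setOf_eval_eq_zero_le' hp
  rw [eventually_cofinite] at h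
  refine ae_iff.2 (measure_mono_null (fun x hx => ?_) (h.measure_zero volume))
  refine fun hle => hx ((encard_le_encard ?_).trans ((encard_image_le (Prod.mk x) _).trans hle))
  rintro ⟨a, b⟩ ⟨hab, rfl⟩
  exact ⟨b, hab, rfl⟩

theorem ae_encard_setOf_eval_eq_zero_snd_le {p : MvPolynomial (Fin 2) ℝ} (hp : p ≠ 0) :
    ∀ᵐ y : ℝ, {z : ℝ × ℝ | MvPolynomial.eval ![z.1, z.2] p = 0 ∧ z.2 = y}.encard ≤
      p.degreeOf 0 := by
  have h := MvPolynomial.eventually_encard_setOf_eval_eq_zero_le hp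
  rw [eventually_cofinite] at h
  refine ae_iff.2 (measure_mono_null (fun y hy => ?_) (h.measure_zero volume))
  refine fun hle => hy ((encard_le_encard ?_).trans
    ((encard_image_le (fun a => (a, y)) _).trans hle))
  rintro ⟨a, b⟩ ⟨hab, rfl⟩
  exact ⟨a, hab, rfl⟩

/-- A bivariate polynomial of degree at most `n` in each variable, not identically zero,
whose zero set in the square `[-1/2,1/2]^2` is a finite union of smooth (C¹) rectifiable
curves, has total nodal length (1-dimensional Hausdorff measure) at most `C·n`. -/
theorem nodal_length_of_bivariate_polynomial :
    ∃ C : ℝ, 0 < C ∧ ∀ (n : ℕ) (p : MvPolynomial (Fin 2) ℝ), p ≠ 0 →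
      (∀ i : Fin 2, p.degreeOf i ≤ n) →
      ∀ (m : ℕ) (γ : Fin m → ℝ → ℝ × ℝ), (∀ i, ContDiff ℝ 1 (γ i)) →
        ({x : ℝ × ℝ | MvPolynomial.eval ![x.1, x.2] p = 0} ∩
            Set.Icc ((-(1/2) : ℝ), (-(1/2) : ℝ)) ((1/2 : ℝ), (1/2 : ℝ)) =
          ⋃ i, γ i '' Set.Icc (0 : ℝ) 1) →
        μH[1] ({x : ℝ × ℝ | MvPolynomial.eval ![x.1, x.2] p = 0} ∩
            Set.Icc ((-(1/2) : ℝ), (-(1/2) : ℝ)) ((1/2 : ℝ), (1/2 : ℝ)))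
          ≤ ENNReal.ofReal (C * n) := by
  refine ⟨4, by norm_num, fun n p hp hdeg m γ hγ hZ => ?_⟩
  set Z₀ := {x : ℝ × ℝ | MvPolynomial.eval ![x.1, x.2] p = 0}
  set J := Icc (-(1/2) : ℝ) (1/2)
  set regular := fun π : ℝ × ℝ →L[ℝ] ℝ =>
    ⋃ i, γ i '' {t ∈ Icc (0 : ℝ) 1 | ‖deriv (γ i) t‖ < (2 : ℝ≥0) * |π (deriv (γ i) t)|}
  have hγZ : ∀ i, γ i '' Icc 0 1 ⊆ Z₀ ∩ Icc (-(1/2), -(1/2)) (1/2, 1/2) :=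
    fun i => hZ ▸ subset_iUnion (fun i => γ i '' Icc 0 1) i
  have hcover : Z₀ ∩ Icc (-(1/2), -(1/2)) (1/2, 1/2) ⊆ (⋃ i, γ i '' {t | deriv (γ i) t = 0}) ∪
      regular (ContinuousLinearMap.fst ℝ ℝ ℝ) ∪ regular (ContinuousLinearMap.snd ℝ ℝ ℝ) := by
    rw [hZ]
    rintro _ ⟨_, ⟨i, rfl⟩, t, ht, rfl⟩
    by_cases hd : deriv (γ i) t = 0
    · exact Or.inl (Or.inl (mem_iUnion.2 ⟨i, t, hd, rfl⟩))
    rcases Prod.norm_lt_two_mul_norm_fst_or_snd hd with h | h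
    · exact Or.inl (Or.inr (mem_iUnion.2 ⟨i, t, ⟨ht, by simpa using h⟩, rfl⟩))
    · exact Or.inr (mem_iUnion.2 ⟨i, t, ⟨ht, by simpa using h⟩, rfl⟩)
  have hfst : μH[1] (regular (ContinuousLinearMap.fst ℝ ℝ ℝ)) ≤ 2 * n * volume J :=
    hausdorffMeasure_iUnion_image_setOf_norm_deriv_lt_le (Z := Z₀) (J := J) hγ isClosed_Icc _ 2
      (fun i z hz => ⟨(hγZ i hz).1, (hγZ i hz).2.1.1, (hγZ i hz).2.2.1⟩)
      ((ae_encard_setOf_eval_eq_zero_fst_le hp).mono fun x hx => hx.trans (mod_cast hdeg 1))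
  have hsnd : μH[1] (regular (ContinuousLinearMap.snd ℝ ℝ ℝ)) ≤ 2 * n * volume J :=
    hausdorffMeasure_iUnion_image_setOf_norm_deriv_lt_le (Z := Z₀) (J := J) hγ isClosed_Icc _ 2
      (fun i z hz => ⟨(hγZ i hz).1, (hγZ i hz).2.1.2, (hγZ i hz).2.2.2⟩)
      ((ae_encard_setOf_eval_eq_zero_snd_le hp).mono fun y hy => hy.trans (mod_cast hdeg 0))
  have hJ : volume J = 1 := by norm_num [J, Real.volume_Icc]
  calc μH[1] (Z₀ ∩ Icc (-(1/2), -(1/2)) (1/2, 1/2))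
      ≤ μH[1] (⋃ i, γ i '' {t | deriv (γ i) t = 0}) +
        μH[1] (regular (ContinuousLinearMap.fst ℝ ℝ ℝ)) +
        μH[1] (regular (ContinuousLinearMap.snd ℝ ℝ ℝ)) :=
        (measure_mono hcover).trans <| (measure_union_le _ _).trans <|
          add_le_add_left (measure_union_le _ _) _
    _ ≤ 0 + 2 * n * 1 + 2 * n * 1 := by
        rw [← hJ]
        gcongr
        exact (measure_iUnion_null fun i => hausdorffMeasure_image_setOf_deriv_eq_zero (hγ i)).le
    _ = ENNReal.ofReal (4 * n) := by
        rw [ENNReal.ofReal_mul (by norm_num)]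
        norm_num
        ring
end

section
/- Let g ∈ C¹(B(2W)) with b := inf_{B(2W)} (|g| + |∇g|) > 0, and let t < b/2. Then distinct connected components of the sublevel set {x ∈ B(2W) : |g(x)| ≤ t} are disjoint and, for t sufficiently small depending on b and the modulus of continuity of g, each connected component of {|g| ≤ t} that is contained in B(W) contains at least one connected component of the zero set {g = 0}. -/
/-!
A component `T` of the closed sublevel set `{|g| ≤ t}` lying in `B(W)` is compact, so `|g|`
attains its minimum on `T` at some `x`. If `g x ≠ 0`, then `|g x| ≤ t < b/2` forces `∇g x ≠ 0`,
so `|g|` strictly decreases along some ray out of `x`; a short initial segment of that ray stays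
in `{|g| ≤ |g x|}`, hence in the sublevel set, hence (being connected) in `T`, contradicting
minimality. So `T` contains a zero, and with it the zero-set component through that zero.
-/

open Metric

noncomputable section

abbrev E2 : Type := EuclideanSpace ℝ (Fin 2)

def gradOn (W : ℝ) (g : E2 → ℝ) (x : E2) : E2 :=
  (InnerProductSpace.toDual ℝ E2).symm (fderivWithin ℝ g (closedBall (0 : E2) (2 * W)) x)

open Set Filter Topology

section Components

variable {α : Type*} [TopologicalSpace α] {F : Set α}

theorem connectedComponentIn_disjoint {x y : α}
    (h : connectedComponentIn F x ≠ connectedComponentIn F y) :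
    Disjoint (connectedComponentIn F x) (connectedComponentIn F y) :=
  Set.disjoint_left.2 fun _ h1 h2 =>
    h ((connectedComponentIn_eq h1).trans (connectedComponentIn_eq h2).symm)

theorem IsClosed.connectedComponentIn (hF : IsClosed F) (x : α) :
    IsClosed (connectedComponentIn F x) := by
  by_cases hx : x ∈ F
  · exact isClosed_of_closure_subset <|
      isPreconnected_connectedComponentIn.closure.subset_connectedComponentIn
        (subset_closure (mem_connectedComponentIn hx))
        (closure_minimal (connectedComponentIn_subset F x) hF)
  · rw [connectedComponentIn_eq_empty hx]
    exact isClosed_empty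

end Components

theorem HasDerivAt.eventually_lt_of_neg {φ : ℝ → ℝ} {d x : ℝ} (h : HasDerivAt φ d x)
    (hd : d < 0) : ∀ᶠ s in 𝓝[>] x, φ s < φ x := by
  filter_upwards [h.hasDerivWithinAt.limsup_slope_le' (lt_irrefl x) hd, self_mem_nhdsWithin]
    with s hslope (hs : x < s)
  rwa [slope_def_field, div_lt_iff₀ (sub_pos.2 hs), zero_mul, sub_neg] at hslope

section Descent

variable {E : Type*} [NormedAddCommGroup E] [NormedSpace ℝ E] {h : E → ℝ} {L : E →L[ℝ] ℝ}
  {x : E}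

theorem HasFDerivAt.exists_eventually_lt_along_ray (hh : HasFDerivAt h L x) (hL : L ≠ 0) :
    ∃ w : E, ∀ᶠ s in 𝓝[>] (0 : ℝ), h (x + s • w) < h x := by
  obtain ⟨v, hv⟩ : ∃ v, L v ≠ 0 := by
    by_contra! H
    exact hL (ContinuousLinearMap.ext H)
  refine ⟨-(L v) • v, ?_⟩
  have hray : HasDerivAt (fun s : ℝ => x + s • (-(L v) • v)) (-(L v) • v) 0 := by
    simpa using ((hasDerivAt_id (0 : ℝ)).smul_const (-(L v) • v)).const_add x
  have hslope : L (-(L v) • v) < 0 := by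
    simpa using mul_self_pos.2 hv
  simpa using (hh.comp_hasDerivAt_of_eq 0 hray (by simp)).eventually_lt_of_neg hslope

theorem HasFDerivAt.exists_isPreconnected_descent {K : Set E} (hh : HasFDerivAt h L x)
    (hL : L ≠ 0) (hK : K ∈ 𝓝 x) :
    ∃ C : Set E, IsPreconnected C ∧ x ∈ C ∧ C ⊆ {y ∈ K | h y ≤ h x} ∧ ∃ y ∈ C, h y < h x := by
  obtain ⟨w, hw⟩ := hh.exists_eventually_lt_along_ray hL
  have hray : Continuous fun s : ℝ => x + s • w := by fun_prop
  have hwK : ∀ᶠ s in 𝓝[>] (0 : ℝ), x + s • w ∈ K :=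
    nhdsWithin_le_nhds (hray.tendsto' 0 x (by simp) hK)
  obtain ⟨ε, hε, hεsub⟩ := mem_nhdsGT_iff_exists_Ioc_subset.1 (hw.and hwK)
  refine ⟨(fun s : ℝ => x + s • w) '' Icc 0 ε, isPreconnected_Icc.image _ hray.continuousOn,
    ⟨0, left_mem_Icc.2 (le_of_lt hε), by simp⟩, ?_,
    x + ε • w, ⟨ε, right_mem_Icc.2 (le_of_lt hε), rfl⟩, (hεsub ⟨hε, le_rfl⟩).1⟩
  rintro _ ⟨s, hs, rfl⟩
  rcases hs.1.eq_or_lt with rfl | hs0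
  · simpa using mem_of_mem_nhds hK
  · obtain ⟨hlt, hmem⟩ := hεsub ⟨hs0, hs.2⟩
    exact ⟨hmem, hlt.le⟩

end Descent

-- `fderiv ℝ f y ≠ 0` also encodes differentiability at `y`, since `fderiv` is `0` elsewhere.
theorem exists_zero_mem_connectedComponentIn_sublevel {E : Type*} [NormedAddCommGroup E]
    [NormedSpace ℝ E] {K : Set E} {f : E → ℝ} {t : ℝ} {x₀ : E}
    (hx₀ : x₀ ∈ {y ∈ K | |f y| ≤ t})
    (hcpt : IsCompact (connectedComponentIn {y ∈ K | |f y| ≤ t} x₀))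
    (hint : connectedComponentIn {y ∈ K | |f y| ≤ t} x₀ ⊆ interior K)
    (hcrit : ∀ y ∈ connectedComponentIn {y ∈ K | |f y| ≤ t} x₀, fderiv ℝ f y ≠ 0) :
    ∃ x ∈ connectedComponentIn {y ∈ K | |f y| ≤ t} x₀, f x = 0 := by
  set S := {y ∈ K | |f y| ≤ t}
  have hdiff : ∀ y ∈ connectedComponentIn S x₀, DifferentiableAt ℝ f y := fun y hy =>
    by_contra fun hd => hcrit y hy (fderiv_zero_of_not_differentiableAt hd)
  obtain ⟨xm, hxm, hmin⟩ := hcpt.exists_isMinOn ⟨x₀, mem_connectedComponentIn hx₀⟩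
    fun y hy => (hdiff y hy).continuousAt.abs.continuousWithinAt
  by_contra! hzero
  have hsign : (SignType.sign (f xm) : ℝ) ≠ 0 := fun h0 =>
    hzero xm hxm (by simpa [h0] using (sign_mul_abs (f xm)).symm)
  obtain ⟨C, hC, hxmC, hCsub, y, hyC, hy⟩ :=
    ((hdiff xm hxm).hasFDerivAt.abs (hzero xm hxm)).exists_isPreconnected_descent
      (smul_ne_zero hsign (hcrit xm hxm))
      (mem_interior_iff_mem_nhds.1 (hint hxm))
  have hCS : C ⊆ S := fun z hz =>
    ⟨(hCsub hz).1, (hCsub hz).2.trans (connectedComponentIn_subset S x₀ hxm).2⟩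
  have hCT : C ⊆ connectedComponentIn S x₀ := by
    rw [connectedComponentIn_eq hxm]
    exact hC.subset_connectedComponentIn hxmC hCS
  exact hy.not_ge (isMinOn_iff.1 hmin y (hCT hyC))

theorem gradOn_eq_of_mem_ball {W : ℝ} {g : E2 → ℝ} {x : E2} (hx : x ∈ ball (0 : E2) (2 * W)) :
    gradOn W g x = (InnerProductSpace.toDual ℝ E2).symm (fderiv ℝ g x) := by
  rw [gradOn, fderivWithin_of_mem_nhds (mem_of_superset (isOpen_ball.mem_nhds hx)
    ball_subset_closedBall)]

/-- If `g ∈ C¹(B(0,2W))` with `|g| + |∇g| ≥ b > 0` on `B(0,2W)`, then for `t < b/2`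
distinct connected components of the sublevel set `{|g| ≤ t}` are disjoint, and for `t`
sufficiently small every connected component of `{|g| ≤ t}` contained in `B(0,W)`
contains a connected component of the zero set `{g = 0}`. -/
theorem sublevel_components (W b : ℝ) (hW : 0 < W) (hb : 0 < b) (g : E2 → ℝ)
    (hg : ContDiffOn ℝ 1 g (closedBall (0 : E2) (2 * W)))
    (hlow : ∀ x ∈ closedBall (0 : E2) (2 * W), b ≤ |g x| + ‖gradOn W g x‖) :
    (∀ t : ℝ, t < b / 2 →
      ∀ T₁ T₂ : Set E2,
        (∃ x ∈ {y ∈ closedBall (0 : E2) (2 * W) | |g y| ≤ t},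
          T₁ = connectedComponentIn {y ∈ closedBall (0 : E2) (2 * W) | |g y| ≤ t} x) →
        (∃ x ∈ {y ∈ closedBall (0 : E2) (2 * W) | |g y| ≤ t},
          T₂ = connectedComponentIn {y ∈ closedBall (0 : E2) (2 * W) | |g y| ≤ t} x) →
        T₁ ≠ T₂ → Disjoint T₁ T₂) ∧
    (∃ t₀ : ℝ, 0 < t₀ ∧ ∀ t : ℝ, 0 < t → t < t₀ → t < b / 2 →
      ∀ T : Set E2,
        (∃ x ∈ {y ∈ closedBall (0 : E2) (2 * W) | |g y| ≤ t},
          T = connectedComponentIn {y ∈ closedBall (0 : E2) (2 * W) | |g y| ≤ t} x) →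
        T ⊆ closedBall (0 : E2) W →
        ∃ x ∈ T, g x = 0 ∧
          connectedComponentIn {y ∈ closedBall (0 : E2) (2 * W) | g y = 0} x ⊆ T) := by
  refine ⟨?_, b / 2, half_pos hb, ?_⟩
  · rintro t - T₁ T₂ ⟨x₁, -, rfl⟩ ⟨x₂, -, rfl⟩ hne
    exact connectedComponentIn_disjoint hne
  rintro t ht - htb T ⟨x₀, hx₀, rfl⟩ hTW
  have hS : IsClosed {y ∈ closedBall (0 : E2) (2 * W) | |g y| ≤ t} :=
    hg.continuousOn.abs.preimage_isClosed_of_isClosed isClosed_closedBall isClosed_Iic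
  have hball : closedBall (0 : E2) W ⊆ ball 0 (2 * W) := closedBall_subset_ball (by linarith)
  obtain ⟨x, hxT, hx⟩ := exists_zero_mem_connectedComponentIn_sublevel hx₀
    ((isCompact_closedBall 0 W).of_isClosed_subset (hS.connectedComponentIn x₀) hTW)
    (hTW.trans (hball.trans (isOpen_ball.subset_interior_iff.2 ball_subset_closedBall)))
    fun y hy hcrit => by
      have hyS := connectedComponentIn_subset _ _ hy
      have hby := hlow y hyS.1
      rw [gradOn_eq_of_mem_ball (hball (hTW hy)), hcrit, map_zero, norm_zero] at hby
      linarith [hyS.2]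
  refine ⟨x, hxT, hx, ?_⟩
  rw [connectedComponentIn_eq hxT]
  exact connectedComponentIn_mono x fun y hy => ⟨hy.1, by simp [hy.2, ht.le]⟩
end
end
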